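/- For every t ∈ (0, t₀), every λ ∈ [0,1) and every x ∈ Ω'', it holds liminf_{μ→0⁺} ( f_t(x,λ+μ) − f_t(x,λ) )/μ ≥ −e^{−2Kλ}·(K/t)·L_{t,λ}(x)². -/

import Mathlib

open Metric Filter Set Topology

/-- The Hopf–Lax-type function `f_t(x,λ) = inf_{y ∈ Ω'} { e^{-2Kλ} d(x,y)²/(2t) - d_Y(u(x),u(y)) }`. -/
noncomputable def fT {X Y : Type*} [MetricSpace X] [MetricSpace Y]
    (Ω' : Set X) (u : X → Y) (K t lam : ℝ) (x : X) : ℝ :=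
  ⨅ y : Ω', (Real.exp (-2 * K * lam) * dist x (y : X) ^ 2 / (2 * t) - dist (u x) (u (y : X)))

/-- The set `S_t(x,λ)` of points of `Ω'` attaining the infimum defining `f_t(x,λ)`. -/
noncomputable def minSet {X Y : Type*} [MetricSpace X] [MetricSpace Y]
    (Ω' : Set X) (u : X → Y) (K t lam : ℝ) (x : X) : Set X :=
  {y ∈ Ω' | fT Ω' u K t lam x
    = Real.exp (-2 * K * lam) * dist x y ^ 2 / (2 * t) - dist (u x) (u y)}

/-- `L_{t,λ}(x) := min { d(x,y) : y ∈ S_t(x,λ) }` (as an infimum, which is attained). -/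
noncomputable def minDist {X Y : Type*} [MetricSpace X] [MetricSpace Y]
    (Ω' : Set X) (u : X → Y) (K t lam : ℝ) (x : X) : ℝ :=
  sInf ((fun y => dist x y) '' minSet Ω' u K t lam x)

/-!
Write `c(λ) = e^{-2Kλ}` and let `w` minimize the cost `c(λ+μ) d(x,y)²/(2t) - d_Y(u x, u y)`.
As `w` is also a competitor at `λ`, `f_t(x,λ+μ) - f_t(x,λ) ≥ (c(λ+μ) - c(λ)) d(x,w)²/(2t) ≥ -2Kμ c(λ) d(x,w)²/(2t)`,
by convexity of `exp`. It remains to see that `d(x,w)` cannot fall below any `ρ < L` as `μ → 0⁺`: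
on the compact ball of radius `ρ` the cost at `λ` exceeds `f_t(x,λ)` by a positive margin, while
`f_t(x,λ+μ) → f_t(x,λ)` and the cost is nondecreasing in `λ`.

Minimizers exist because `t < t₀` confines every point of nonpositive cost to the closed ball of
radius `D/2` around `x`, which is compact and contained in `Ω'`.
-/

theorem closedBall_subset_of_lt_sInf_dist {X : Type*} [MetricSpace X] {s S : Set X} {x : X}
    (hx : x ∈ s) {r : ℝ} (hr : r < sInf ((fun p : X × X => dist p.1 p.2) '' (s ×ˢ Sᶜ))) :
    closedBall x r ⊆ S := by
  intro z hz
  by_contra hzS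
  have : sInf ((fun p : X × X => dist p.1 p.2) '' (s ×ˢ Sᶜ)) ≤ dist x z :=
    csInf_le ⟨0, by rintro _ ⟨p, -, rfl⟩; exact dist_nonneg⟩ ⟨(x, z), ⟨hx, hzS⟩, rfl⟩
  linarith [mem_closedBall'.1 hz]

noncomputable def hopfLaxCost {X Y : Type*} [MetricSpace X] [MetricSpace Y]
    (u : X → Y) (K t lam : ℝ) (x y : X) : ℝ :=
  Real.exp (-2 * K * lam) * dist x y ^ 2 / (2 * t) - dist (u x) (u y)

section HopfLax

variable {X Y : Type*} [MetricSpace X] [MetricSpace Y] {Ω' : Set X} {u : X → Y}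
  {K t lam osc R : ℝ} {x y : X}

@[simp]
theorem hopfLaxCost_self : hopfLaxCost u K t lam x x = 0 := by
  simp [hopfLaxCost]

theorem continuous_hopfLaxCost_param : Continuous fun lam => hopfLaxCost u K t lam x y := by
  unfold hopfLaxCost
  fun_prop

theorem continuousOn_hopfLaxCost {s : Set X} (hu : ContinuousOn u s) :
    ContinuousOn (hopfLaxCost u K t lam x) s := by
  unfold hopfLaxCost
  exact (Continuous.continuousOn (by fun_prop)).sub
    (continuous_dist.comp_continuousOn (continuousOn_const.prodMk hu))

theorem mul_sq_dist_mul_le_hopfLaxCost_add_sub (ht : 0 < t) (μ : ℝ) :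
    Real.exp (-2 * K * lam) * (-K / t) * dist x y ^ 2 * μ
      ≤ hopfLaxCost u K t (lam + μ) x y - hopfLaxCost u K t lam x y := by
  have hexp : Real.exp (-2 * K * lam) * (1 + -2 * K * μ) ≤ Real.exp (-2 * K * (lam + μ)) := by
    rw [show -2 * K * (lam + μ) = -2 * K * lam + -2 * K * μ by ring, Real.exp_add]
    gcongr
    linarith [Real.add_one_le_exp (-2 * K * μ)]
  have key : Real.exp (-2 * K * lam) * (-K / t) * dist x y ^ 2 * μ
      = (Real.exp (-2 * K * lam) * (1 + -2 * K * μ) - Real.exp (-2 * K * lam))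
          * dist x y ^ 2 / (2 * t) := by
    field_simp
    ring
  have hsplit : hopfLaxCost u K t (lam + μ) x y - hopfLaxCost u K t lam x y
      = (Real.exp (-2 * K * (lam + μ)) - Real.exp (-2 * K * lam)) * dist x y ^ 2 / (2 * t) := by
    unfold hopfLaxCost
    ring
  rw [key, hsplit]
  gcongr

theorem hopfLaxCost_le_hopfLaxCost_add (hK : K ≤ 0) (ht : 0 < t) {μ : ℝ} (hμ : 0 ≤ μ) :
    hopfLaxCost u K t lam x y ≤ hopfLaxCost u K t (lam + μ) x y := by
  have h := mul_sq_dist_mul_le_hopfLaxCost_add_sub (u := u) (K := K) (lam := lam) (x := x)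
    (y := y) ht μ
  have : 0 ≤ Real.exp (-2 * K * lam) * (-K / t) * dist x y ^ 2 * μ :=
    mul_nonneg (mul_nonneg (mul_nonneg (Real.exp_pos _).le (div_nonneg (by linarith) ht.le))
      (sq_nonneg _)) hμ
  linarith

theorem neg_le_hopfLaxCost (ht : 0 < t) (hosc : dist (u x) (u y) ≤ osc) :
    -osc ≤ hopfLaxCost u K t lam x y := by
  have : 0 ≤ Real.exp (-2 * K * lam) * dist x y ^ 2 / (2 * t) := by positivity
  unfold hopfLaxCost
  linarith

theorem fT_le_hopfLaxCost (ht : 0 < t) (hosc : ∀ y ∈ Ω', dist (u x) (u y) ≤ osc) (hy : y ∈ Ω') :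
    fT Ω' u K t lam x ≤ hopfLaxCost u K t lam x y := by
  refine ciInf_le (f := fun z : Ω' => hopfLaxCost u K t lam x z) ⟨-osc, ?_⟩ ⟨y, hy⟩
  rintro _ ⟨z, rfl⟩
  exact neg_le_hopfLaxCost ht (hosc z z.2)

theorem dist_le_of_hopfLaxCost_nonpos (hK : K ≤ 0) (hlam : 0 ≤ lam) (ht : 0 < t) (hR : 0 ≤ R)
    (hRt : 2 * t * osc ≤ R ^ 2) (hosc : dist (u x) (u y) ≤ osc)
    (hy : hopfLaxCost u K t lam x y ≤ 0) : dist x y ≤ R := by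
  have hquot : dist x y ^ 2 / (2 * t) ≤ osc :=
    calc dist x y ^ 2 / (2 * t)
        ≤ Real.exp (-2 * K * lam) * dist x y ^ 2 / (2 * t) := by
          gcongr
          exact le_mul_of_one_le_left (sq_nonneg _) (Real.one_le_exp (by nlinarith))
      _ ≤ dist (u x) (u y) := by unfold hopfLaxCost at hy; linarith
      _ ≤ osc := hosc
  rw [div_le_iff₀ (by positivity)] at hquot
  exact (pow_le_pow_iff_left₀ dist_nonneg hR two_ne_zero).1 (by linarith)

theorem fT_eq_hopfLaxCost_of_mem_minSet (hy : y ∈ minSet Ω' u K t lam x) :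
    fT Ω' u K t lam x = hopfLaxCost u K t lam x y :=
  hy.2

theorem minDist_le_dist (hy : y ∈ minSet Ω' u K t lam x) : minDist Ω' u K t lam x ≤ dist x y :=
  csInf_le ⟨0, by rintro _ ⟨z, -, rfl⟩; exact dist_nonneg⟩ ⟨y, hy, rfl⟩

theorem minDist_nonneg : 0 ≤ minDist Ω' u K t lam x :=
  Real.sInf_nonneg (by rintro _ ⟨z, -, rfl⟩; exact dist_nonneg)

theorem mul_sq_dist_mul_le_fT_add_sub (ht : 0 < t) (hosc : ∀ y ∈ Ω', dist (u x) (u y) ≤ osc)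
    {μ : ℝ} (hy : y ∈ minSet Ω' u K t (lam + μ) x) :
    Real.exp (-2 * K * lam) * (-K / t) * dist x y ^ 2 * μ
      ≤ fT Ω' u K t (lam + μ) x - fT Ω' u K t lam x := by
  rw [fT_eq_hopfLaxCost_of_mem_minSet hy]
  linarith [mul_sq_dist_mul_le_hopfLaxCost_add_sub (u := u) (K := K) (lam := lam) (x := x) (y := y)
    ht μ, fT_le_hopfLaxCost (K := K) (lam := lam) ht hosc hy.1]

variable [ProperSpace X]

theorem exists_mem_minSet_dist_le (hu : ContinuousOn u Ω') (hK : K ≤ 0) (hlam : 0 ≤ lam)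
    (ht : 0 < t) (hosc : ∀ y ∈ Ω', dist (u x) (u y) ≤ osc) (hR : 0 ≤ R)
    (hball : closedBall x R ⊆ Ω') (hRt : 2 * t * osc ≤ R ^ 2) :
    ∃ y ∈ minSet Ω' u K t lam x, dist x y ≤ R := by
  have hxB : x ∈ closedBall x R := mem_closedBall_self hR
  obtain ⟨y₀, hy₀B, hy₀min⟩ := (isCompact_closedBall x R).exists_isMinOn ⟨x, hxB⟩
    (continuousOn_hopfLaxCost (K := K) (t := t) (lam := lam) (hu.mono hball))
  have hle : ∀ y ∈ Ω', hopfLaxCost u K t lam x y₀ ≤ hopfLaxCost u K t lam x y := by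
    intro y hy
    by_cases hyB : y ∈ closedBall x R
    · exact hy₀min hyB
    · have hy₀x : hopfLaxCost u K t lam x y₀ ≤ 0 := by simpa using hy₀min hxB
      by_contra! h
      exact hyB (mem_closedBall'.2
        (dist_le_of_hopfLaxCost_nonpos hK hlam ht hR hRt (hosc y hy) (by linarith)))
  have : Nonempty Ω' := ⟨⟨x, hball hxB⟩⟩
  exact ⟨y₀, ⟨hball hy₀B, le_antisymm (fT_le_hopfLaxCost ht hosc (hball hy₀B))
    (le_ciInf fun y => hle y y.2)⟩, mem_closedBall'.1 hy₀B⟩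

theorem eventually_lt_dist_of_mem_minSet (hu : ContinuousOn u Ω') (hK : K ≤ 0) (hlam : 0 ≤ lam)
    (ht : 0 < t) (hosc : ∀ y ∈ Ω', dist (u x) (u y) ≤ osc) (hR : 0 ≤ R)
    (hball : closedBall x R ⊆ Ω') (hRt : 2 * t * osc ≤ R ^ 2) {ρ : ℝ}
    (hρ : ρ < minDist Ω' u K t lam x) :
    ∀ᶠ μ in 𝓝[>] 0, ∀ w ∈ minSet Ω' u K t (lam + μ) x, ρ < dist x w := by
  obtain ⟨y₀, hy₀, hy₀R⟩ := exists_mem_minSet_dist_le hu hK hlam ht hosc hR hball hRt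
  have hρball : closedBall x ρ ⊆ Ω' :=
    (closedBall_subset_closedBall (by linarith [minDist_le_dist hy₀])).trans hball
  -- No minimizer lies in the compact ball of radius `ρ < L`, so there the cost exceeds `fT` by a
  -- positive margin.
  obtain ⟨m, hfm, hm⟩ := (isCompact_closedBall x ρ).exists_forall_le'
    (continuousOn_hopfLaxCost (K := K) (t := t) (lam := lam) (hu.mono hρball))
    (a := fT Ω' u K t lam x) fun z hz => by
      refine (fT_le_hopfLaxCost ht hosc (hρball hz)).lt_of_ne fun h => ?_
      have := minDist_le_dist ⟨hρball hz, h⟩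
      rw [mem_closedBall'] at hz
      linarith
  have hy₀near : ∀ᶠ μ in 𝓝 (0 : ℝ), hopfLaxCost u K t (lam + μ) x y₀ < m := by
    have hcont : Continuous fun μ => hopfLaxCost u K t (lam + μ) x y₀ :=
      continuous_hopfLaxCost_param.comp (continuous_const.add continuous_id)
    refine hcont.continuousAt.eventually_lt continuousAt_const ?_
    rwa [add_zero, ← fT_eq_hopfLaxCost_of_mem_minSet hy₀]
  filter_upwards [nhdsWithin_le_nhds hy₀near, self_mem_nhdsWithin] with μ hμ (hμ0 : 0 < μ) w hw
  by_contra! hwρ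
  have hwy₀ : hopfLaxCost u K t (lam + μ) x w ≤ hopfLaxCost u K t (lam + μ) x y₀ :=
    fT_eq_hopfLaxCost_of_mem_minSet hw ▸ fT_le_hopfLaxCost ht hosc hy₀.1
  linarith [hm w (mem_closedBall'.2 hwρ),
    hopfLaxCost_le_hopfLaxCost_add (u := u) (x := x) (y := w) (lam := lam) hK ht hμ0.le]

theorem eventually_mul_sq_le_fT_slope (hu : ContinuousOn u Ω') (hK : K ≤ 0) (hlam : 0 ≤ lam)
    (ht : 0 < t) (hosc : ∀ y ∈ Ω', dist (u x) (u y) ≤ osc) (hR : 0 ≤ R)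
    (hball : closedBall x R ⊆ Ω') (hRt : 2 * t * osc ≤ R ^ 2) {ρ : ℝ}
    (hρ : ρ < minDist Ω' u K t lam x) :
    ∀ᶠ μ in 𝓝[>] 0, Real.exp (-2 * K * lam) * (-K / t) * max ρ 0 ^ 2
      ≤ (fT Ω' u K t (lam + μ) x - fT Ω' u K t lam x) / μ := by
  have hslope : 0 ≤ Real.exp (-2 * K * lam) * (-K / t) :=
    mul_nonneg (Real.exp_pos _).le (div_nonneg (by linarith) ht.le)
  filter_upwards [eventually_lt_dist_of_mem_minSet hu hK hlam ht hosc hR hball hRt hρ,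
    self_mem_nhdsWithin] with μ hdist (hμ : 0 < μ)
  obtain ⟨w, hw, -⟩ :=
    exists_mem_minSet_dist_le hu hK (by linarith : 0 ≤ lam + μ) ht hosc hR hball hRt
  rw [le_div_iff₀ hμ]
  calc Real.exp (-2 * K * lam) * (-K / t) * max ρ 0 ^ 2 * μ
      ≤ Real.exp (-2 * K * lam) * (-K / t) * dist x w ^ 2 * μ := by
        gcongr
        exact max_le (hdist w hw).le dist_nonneg
    _ ≤ _ := mul_sq_dist_mul_le_fT_add_sub ht hosc hw

theorem le_liminf_fT_slope (hu : ContinuousOn u Ω') (hK : K ≤ 0) (hlam : 0 ≤ lam)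
    (ht : 0 < t) (hosc : ∀ y ∈ Ω', dist (u x) (u y) ≤ osc) (hR : 0 ≤ R)
    (hball : closedBall x R ⊆ Ω') (hRt : 2 * t * osc ≤ R ^ 2) :
    ((-(Real.exp (-2 * K * lam) * (K / t) * minDist Ω' u K t lam x ^ 2) : ℝ) : EReal)
      ≤ liminf (fun μ : ℝ => (((fT Ω' u K t (lam + μ) x - fT Ω' u K t lam x) / μ : ℝ) : EReal))
          (𝓝[>] 0) := by
  set L := minDist Ω' u K t lam x
  set a := Real.exp (-2 * K * lam) * (-K / t)
  have hlim : Tendsto (fun ρ : ℝ => ((a * max ρ 0 ^ 2 : ℝ) : EReal))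
      (𝓝[<] L) (𝓝 ((-(Real.exp (-2 * K * lam) * (K / t) * L ^ 2) : ℝ) : EReal)) := by
    have hL : -(Real.exp (-2 * K * lam) * (K / t) * L ^ 2) = a * max L 0 ^ 2 := by
      rw [max_eq_left minDist_nonneg]
      ring
    rw [hL]
    exact ((continuous_coe_real_ereal.comp (by fun_prop)).tendsto L).mono_left nhdsWithin_le_nhds
  refine le_of_tendsto hlim (eventually_nhdsWithin_of_forall fun ρ hρ => le_liminf_of_le
    (h := ?_))
  filter_upwards [eventually_mul_sq_le_fT_slope hu hK hlam ht hosc hR hball hRt hρ] with μ hμ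
  exact EReal.coe_le_coe_iff.2 hμ

end HopfLax

theorem stmt4_general {X Y : Type*} [MetricSpace X] [ProperSpace X] [MetricSpace Y]
    (Ω' Ω'' : Set X)
    (hsub : Ω'' ⊆ Ω')
    (u : X → Y) (hu : ContinuousOn u Ω')
    (osc : ℝ)
    (hoscBdd : BddAbove ((fun p : X × X => dist (u p.1) (u p.2)) '' (Ω' ×ˢ Ω')))
    (hosc : osc = sSup ((fun p : X × X => dist (u p.1) (u p.2)) '' (Ω' ×ˢ Ω')))
    (K : ℝ) (hK : K ≤ 0)
    (D : ℝ) (hD : D = sInf ((fun p : X × X => dist p.1 p.2) '' (Ω'' ×ˢ Ω'ᶜ)))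
    (hDpos : 0 < D)
    (Cstar t₀ : ℝ) (hC : Cstar = 2 * osc + 2) (ht₀ : t₀ = D ^ 2 / (4 * Cstar)) :
    ∀ t ∈ Ioo (0 : ℝ) t₀, ∀ lam ∈ Ico (0 : ℝ) 1, ∀ x ∈ Ω'',
      ((-(Real.exp (-2 * K * lam) * (K / t) * minDist Ω' u K t lam x ^ 2) : ℝ) : EReal)
        ≤ Filter.liminf
            (fun μ : ℝ => (((fT Ω' u K t (lam + μ) x - fT Ω' u K t lam x) / μ : ℝ) : EReal))
            (𝓝[>] (0 : ℝ)) := by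
  rintro t ⟨ht, htt₀⟩ lam ⟨hlam, -⟩ x hx
  have hoscx : ∀ y ∈ Ω', dist (u x) (u y) ≤ osc := fun y hy =>
    hosc ▸ le_csSup hoscBdd ⟨(x, y), ⟨hsub hx, hy⟩, rfl⟩
  have hosc0 : 0 ≤ osc := by simpa using hoscx x (hsub hx)
  have hball : closedBall x (D / 2) ⊆ Ω' :=
    closedBall_subset_of_lt_sInf_dist hx (by linarith)
  have hRt : 2 * t * osc ≤ (D / 2) ^ 2 := by
    rw [ht₀, hC, lt_div_iff₀ (by linarith)] at htt₀
    nlinarith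
  exact le_liminf_fT_slope hu hK hlam ht hoscx (by linarith) hball hRt

theorem stmt4 {X Y : Type*} [MetricSpace X] [ProperSpace X] [MetricSpace Y]
    (Ω' Ω'' : Set X) (hΩ'open : IsOpen Ω') (hΩ'bdd : Bornology.IsBounded Ω')
    (hΩ'ne : Ω'.Nonempty) (hΩ''open : IsOpen Ω'') (hΩ''ne : Ω''.Nonempty)
    (hsub : Ω'' ⊆ Ω')
    (u : X → Y) (hu : ContinuousOn u Ω')
    (osc : ℝ)
    (hoscBdd : BddAbove ((fun p : X × X => dist (u p.1) (u p.2)) '' (Ω' ×ˢ Ω')))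
    (hosc : osc = sSup ((fun p : X × X => dist (u p.1) (u p.2)) '' (Ω' ×ˢ Ω')))
    (K : ℝ) (hK : K ≤ 0)
    (D : ℝ) (hD : D = sInf ((fun p : X × X => dist p.1 p.2) '' (Ω'' ×ˢ Ω'ᶜ)))
    (hDpos : 0 < D)
    (Cstar t₀ : ℝ) (hC : Cstar = 2 * osc + 2) (ht₀ : t₀ = D ^ 2 / (4 * Cstar)) :
    ∀ t ∈ Ioo (0 : ℝ) t₀, ∀ lam ∈ Ico (0 : ℝ) 1, ∀ x ∈ Ω'',
      ((-(Real.exp (-2 * K * lam) * (K / t) * minDist Ω' u K t lam x ^ 2) : ℝ) : EReal)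
        ≤ Filter.liminf
            (fun μ : ℝ => (((fT Ω' u K t (lam + μ) x - fT Ω' u K t lam x) / μ : ℝ) : EReal))
            (𝓝[>] (0 : ℝ)) :=
  stmt4_general Ω' Ω'' hsub u hu osc hoscBdd hosc K hK D hD hDpos Cstar t₀ hC ht₀
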